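/- Every unit veto interval (UVI) graph is 4-colorable. -/
import Mathlib


/-- A veto interval: a closed interval `[l, r]` with a veto mark `v`, `l < v < r`. -/
structure VetoInterval where
  l : ℝ
  v : ℝ
  r : ℝ
  hlv : l < v
  hvr : v < r

/-- Two veto intervals are adjacent iff they intersect and neither contains
the veto mark of the other. -/
def VIAdj (a b : VetoInterval) : Prop :=
  (a.v < b.l ∧ b.l < a.r ∧ a.r < b.v) ∨ (b.v < a.l ∧ a.l < b.r ∧ b.r < a.v)

/-- `G` is a veto interval graph. -/
def IsVIGraph {V : Type*} (G : SimpleGraph V) : Prop :=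
  ∃ f : V → VetoInterval, ∀ a b : V, G.Adj a b ↔ VIAdj (f a) (f b)

/-- `G` is a unit veto interval (UVI) graph. -/
def IsUVIGraph {V : Type*} (G : SimpleGraph V) : Prop :=
  ∃ f : V → VetoInterval,
    (∀ a b : V, G.Adj a b ↔ VIAdj (f a) (f b)) ∧
    (∀ a b : V, (f a).r - (f a).l = (f b).r - (f b).l)

/-- The color of a veto interval relative to scale `L`: the parity of the cell
containing the left endpoint, together with whether the veto mark lies in the
same cell as the left endpoint. -/
noncomputable def vicol (A : VetoInterval) (L : ℝ) : ZMod 2 × Prop :=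
  ((⌊A.l / L⌋ : ZMod 2), ⌊A.v / L⌋ = ⌊A.l / L⌋)

lemma vicol_key (A B : VetoInterval) (L : ℝ) (hA : A.r - A.l = L)
    (h1 : A.v < B.l) (h2 : B.l < A.r) (h3 : A.r < B.v) :
    vicol A L ≠ vicol B L := by
  have hL : 0 < L := by have := A.hlv; have := A.hvr; linarith
  set ka := ⌊A.l / L⌋ with hka
  set kb := ⌊B.l / L⌋ with hkb
  have hAl : (ka : ℝ) * L ≤ A.l := by
    have := Int.floor_le (A.l / L)
    calc (ka : ℝ) * L ≤ (A.l / L) * L := by nlinarith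
    _ = A.l := by field_simp
  have hlab : A.l < B.l := lt_trans A.hlv h1
  have hle : ka ≤ kb := Int.floor_le_floor (by gcongr)
  have hlt : kb ≤ ka + 1 := by
    have : B.l / L ≤ A.l / L + 1 := by
      rw [div_add' _ _ _ (ne_of_gt hL)]
      gcongr
      linarith
    calc kb ≤ ⌊A.l / L + 1⌋ := Int.floor_le_floor this
    _ = ka + 1 := by rw [Int.floor_add_one]
  rcases (by omega : kb = ka ∨ kb = ka + 1) with hc | hc
  · -- same cell: second components differ
    have hAv : ⌊A.v / L⌋ = ka := by
      rw [Int.floor_eq_iff]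
      constructor
      · calc ((ka : ℤ) : ℝ) ≤ A.l / L := Int.floor_le _
        _ ≤ A.v / L := by gcongr; exact le_of_lt A.hlv
      · calc A.v / L < B.l / L := by gcongr
        _ < kb + 1 := Int.lt_floor_add_one _
        _ = ka + 1 := by push_cast [hc]; ring_nf
    have hBv : ka + 1 ≤ ⌊B.v / L⌋ := by
      rw [Int.le_floor]
      have : ((ka : ℝ) + 1) * L ≤ B.v := by nlinarith
      push_cast
      rw [le_div_iff₀ hL]
      nlinarith
    intro hcon
    have h2nd : (⌊A.v / L⌋ = ka) = (⌊B.v / L⌋ = kb) := congrArg Prod.snd hcon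
    rw [eq_iff_iff] at h2nd
    have : ⌊B.v / L⌋ = kb := h2nd.mp hAv
    omega
  · -- adjacent cells: first components differ mod 2
    intro hcon
    have h1st : ((ka : ZMod 2)) = ((kb : ZMod 2)) := congrArg Prod.fst hcon
    rw [hc] at h1st
    push_cast at h1st
    simp [left_eq_add] at h1st

/-- Every UVI graph is 4-colorable. -/
theorem stmt_11 {V : Type*} (G : SimpleGraph V) (h : IsUVIGraph G) :
    G.Colorable 4 := by
  obtain ⟨f, hadj, hlen⟩ := h
  let C : G.Coloring (ZMod 2 × Prop) := SimpleGraph.Coloring.mk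
    (fun x => vicol (f x) ((f x).r - (f x).l)) (by
      intro a b hab
      have hsame : (f b).r - (f b).l = (f a).r - (f a).l := hlen b a
      show vicol (f a) ((f a).r - (f a).l) ≠ vicol (f b) ((f b).r - (f b).l)
      rw [hsame]
      rcases (hadj a b).mp hab with hc | hc
      · exact vicol_key (f a) (f b) _ rfl hc.1 hc.2.1 hc.2.2
      · exact (vicol_key (f b) (f a) _ hsame hc.1 hc.2.1 hc.2.2).symm)
  have hcard : Fintype.card (ZMod 2 × Prop) = 4 := by simp
  exact hcard ▸ C.colorable
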